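/- Let p be a prime, m a positive integer, q = p^m, and let f : 𝔽_q → 𝔽_p be a p-ary function satisfying f(ax) = f(x) for all a ∈ 𝔽_p^* and all x ∈ 𝔽_q. Then for every i ∈ 𝔽_p with i ≠ f(0) and every nonzero β ∈ 𝔽_q^*, the following identity holds in ℂ: #{α ∈ D*_{f,i} : Tr(βα) ≠ 0} = ((p−1)/p)·|D*_{f,i}| − ((p−1)/p²)·Σ_{y∈𝔽_p^*} σ_y( ζ_p^{−i}·W_f(β) ). -/

import Mathlib

open Finset

noncomputable def zeta (p : ℕ) (a : ZMod p) : ℂ :=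
  Complex.exp (2 * Real.pi * Complex.I / p) ^ a.val
def Dset {p : ℕ} {F : Type*} [Fintype F] (f : F → ZMod p) (i : ZMod p) : Finset F :=
  Finset.univ.filter fun x => f x = i
noncomputable def walsh (p : ℕ) {F : Type*} [Fintype F] [CommRing F] [Algebra (ZMod p) F]
    (f : F → ZMod p) (β : F) : ℂ :=
  ∑ x : F, zeta p (f x - Algebra.trace (ZMod p) F (β * x))


section aux
variable (p : ℕ) [Fact p.Prime]

lemma E_prim : IsPrimitiveRoot (Complex.exp (2 * Real.pi * Complex.I / p)) p :=
  Complex.isPrimitiveRoot_exp p (Fact.out (p := p.Prime)).ne_zero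

lemma zeta_natCast (n : ℕ) :
    Complex.exp (2 * Real.pi * Complex.I / p) ^ n = zeta p (n : ZMod p) := by
  rw [zeta, ZMod.val_natCast, pow_eq_pow_mod n (E_prim p).pow_eq_one]

lemma zeta_add (a b : ZMod p) : zeta p (a + b) = zeta p a * zeta p b := by
  simp only [zeta, ← pow_add]
  rw [zeta_natCast, zeta_natCast]
  congr 1
  push_cast [ZMod.natCast_val, ZMod.cast_id]
  ring

lemma zeta_zero : zeta p 0 = 1 := by simp [zeta]

lemma sigma_zeta (τ : ℂ →+* ℂ) (y : ZMod p)
    (hτ : τ (Complex.exp (2 * Real.pi * Complex.I / p))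
      = Complex.exp (2 * Real.pi * Complex.I / p) ^ y.val) (a : ZMod p) :
    τ (zeta p a) = zeta p (y * a) := by
  rw [zeta, map_pow, hτ, ← pow_mul, zeta_natCast]
  rw [show zeta p (y * a) = Complex.exp (2 * Real.pi * Complex.I / p) ^ (y*a).val from rfl,
    zeta_natCast]
  congr 1
  push_cast [ZMod.natCast_val, ZMod.cast_id]
  ring

lemma sum_zeta : ∑ c : ZMod p, zeta p c = 0 := by
  have h1 : 1 < p := (Fact.out (p := p.Prime)).one_lt
  rw [show (0:ℂ) = ∑ k ∈ Finset.range p,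
      Complex.exp (2 * Real.pi * Complex.I / p) ^ k from ((E_prim p).geom_sum_eq_zero h1).symm]
  refine Finset.sum_nbij' (fun c => c.val) (fun k => (k : ZMod p)) ?_ ?_ ?_ ?_ ?_
  · intro c _; exact Finset.mem_range.mpr (ZMod.val_lt c)
  · intro k _; exact Finset.mem_univ _
  · intro c _; simp [ZMod.natCast_val, ZMod.cast_id]
  · intro k hk; exact ZMod.val_cast_of_lt (Finset.mem_range.mp hk)
  · intro c _; rfl

lemma sum_zeta_mul (t : ZMod p) :
    ∑ c : ZMod p, zeta p (c * t) = if t = 0 then (p : ℂ) else 0 := by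
  rcases eq_or_ne t 0 with rfl | ht
  · simp [zeta_zero, ZMod.card]
  · rw [if_neg ht, ← sum_zeta p]
    exact Fintype.sum_bijective (Equiv.mulRight₀ t ht) (Equiv.bijective _)
      _ _ (fun c => rfl)

lemma sum_units_eq (h : ZMod p → ℂ) :
    ∑ y : (ZMod p)ˣ, h (y : ZMod p) = (∑ c : ZMod p, h c) - h 0 := by
  rw [eq_sub_iff_add_eq, ← Finset.sum_erase_add Finset.univ h (Finset.mem_univ (0 : ZMod p))]
  congr 1
  refine Finset.sum_nbij (fun y => (y : ZMod p)) ?_ ?_ ?_ ?_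
  · intro y _; exact Finset.mem_erase.mpr ⟨y.ne_zero, Finset.mem_univ _⟩
  · intro y _ z _ hyz; exact Units.ext hyz
  · intro c hc
    exact ⟨(isUnit_iff_ne_zero.mpr (Finset.mem_erase.mp hc).1).unit, Finset.mem_univ _, rfl⟩
  · intro y _; rfl

end aux

section auxF
variable (p : ℕ) [Fact p.Prime]
variable {F : Type*} [Field F] [Fintype F] [DecidableEq F] [Algebra (ZMod p) F]

lemma sum_univ_smul (a : (ZMod p)ˣ) (g : F → ℂ) :
    ∑ x : F, g (algebraMap (ZMod p) F (a : ZMod p) * x) = ∑ x : F, g x := by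
  have ha : algebraMap (ZMod p) F (a : ZMod p) ≠ 0 := by
    simpa using (map_ne_zero (algebraMap (ZMod p) F)).mpr a.ne_zero
  exact Fintype.sum_bijective (Equiv.mulLeft₀ _ ha) (Equiv.bijective _) _ _ (fun x => rfl)

lemma trace_twist (β : F) (c : ZMod p) (x : F) :
    Algebra.trace (ZMod p) F (β * (algebraMap (ZMod p) F c * x))
      = c * Algebra.trace (ZMod p) F (β * x) := by
  have h : β * (algebraMap (ZMod p) F c * x) = c • (β * x) := by
    rw [Algebra.smul_def]; ring
  rw [h, map_smul, smul_eq_mul]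

lemma char_sum (γ : F) (hγ : γ ≠ 0) :
    ∑ x : F, zeta p (Algebra.trace (ZMod p) F (γ * x)) = 0 := by
  haveI : FiniteDimensional (ZMod p) F := Module.Finite.of_finite
  set L : F → ZMod p := fun x => Algebra.trace (ZMod p) F (γ * x) with hL
  have hsurj : Function.Surjective L := by
    intro c
    obtain ⟨u, hu⟩ := Algebra.trace_surjective (ZMod p) F c
    exact ⟨γ⁻¹ * u, by simp [hL, mul_inv_cancel_left₀ hγ, hu]⟩
  have hcard : ∀ c : ZMod p, (univ.filter fun x => L x = c).card
      = (univ.filter fun x => L x = 0).card := by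
    intro c
    obtain ⟨x0, hx0⟩ := hsurj c
    simp only [hL] at hx0
    refine Finset.card_nbij' (fun x => x - x0) (fun x => x + x0) ?_ ?_ ?_ ?_
    · intro x hx
      simp only [mem_filter, mem_univ, true_and] at hx ⊢
      simp [hL, mul_sub, map_sub] at hx ⊢
      simp [hx, hx0]
    · intro x hx
      simp only [mem_filter, mem_univ, true_and] at hx ⊢
      simp [hL, mul_add, map_add] at hx ⊢
      simp [hx, hx0]
    · intro x _; simp
    · intro x _; simp
  calc ∑ x : F, zeta p (L x)
      = ∑ c : ZMod p, ∑ x ∈ univ.filter fun x => L x = c, zeta p (L x) := by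
        rw [Finset.sum_fiberwise]
    _ = ∑ c : ZMod p, ((univ.filter fun x => L x = 0).card : ℂ) * zeta p c := by
        refine Finset.sum_congr rfl fun c _ => ?_
        rw [Finset.sum_congr rfl (fun x hx => by
          rw [(Finset.mem_filter.mp hx).2]), Finset.sum_const, nsmul_eq_mul, hcard c]
    _ = ((univ.filter fun x => L x = 0).card : ℂ) * ∑ c : ZMod p, zeta p c := by
        rw [Finset.mul_sum]
    _ = 0 := by rw [sum_zeta p, mul_zero]

end auxF

section auxD
variable (p : ℕ) [Fact p.Prime]
variable {F : Type*} [Field F] [Fintype F] [DecidableEq F] [Algebra (ZMod p) F]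

lemma sum_Dset_smul (f : F → ZMod p)
    (hinv : ∀ (a : (ZMod p)ˣ) (x : F), f (algebraMap (ZMod p) F (a : ZMod p) * x) = f x)
    (i : ZMod p) (a : (ZMod p)ˣ) (g : F → ℂ) :
    ∑ u ∈ Dset f i, g (algebraMap (ZMod p) F (a : ZMod p) * u) = ∑ u ∈ Dset f i, g u := by
  refine Finset.sum_nbij' (fun u => algebraMap (ZMod p) F (a : ZMod p) * u)
    (fun u => algebraMap (ZMod p) F ((a⁻¹ : (ZMod p)ˣ) : ZMod p) * u) ?_ ?_ ?_ ?_ ?_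
  · intro u hu
    simp only [Dset, mem_filter, mem_univ, true_and] at hu ⊢
    rw [hinv a u]; exact hu
  · intro u hu
    simp only [Dset, mem_filter, mem_univ, true_and] at hu ⊢
    rw [hinv a⁻¹ u]; exact hu
  · intro u _
    show algebraMap (ZMod p) F ((a⁻¹ : (ZMod p)ˣ) : ZMod p)
        * (algebraMap (ZMod p) F (a : ZMod p) * u) = u
    rw [← mul_assoc, ← map_mul, Units.inv_mul, map_one, one_mul]
  · intro u _
    show algebraMap (ZMod p) F (a : ZMod p)
        * (algebraMap (ZMod p) F ((a⁻¹ : (ZMod p)ˣ) : ZMod p) * u) = u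
    rw [← mul_assoc, ← map_mul, Units.mul_inv, map_one, one_mul]
  · intro u _; rfl

end auxD

/-- Lemma 4.13. Let `f : 𝔽_q → 𝔽_p` satisfy `f(ax) = f(x)` for all
`a ∈ 𝔽_p^*`, `x ∈ 𝔽_q`. Then for every `i ∈ 𝔽_p` with `i ≠ f(0)` and every nonzero
`β ∈ 𝔽_q^*`, the Hamming weight of the codeword `(Tr(βα))_{α ∈ D*_{f,i}}` satisfies
`#{α ∈ D*_{f,i} : Tr(βα) ≠ 0} = ((p−1)/p)·|D*_{f,i}| − ((p−1)/p²)·Σ_{y ∈ 𝔽_p^*}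
σ_y(ζ_p^{−i}·W_f(β))`, where `σ_y` is any ring homomorphism `ℂ →+* ℂ` with
`σ_y(ζ_p) = ζ_p^y`. -/
theorem stmt_17 (p m : ℕ) [Fact p.Prime] (hm : 0 < m)
    (F : Type*) [Field F] [Fintype F] [DecidableEq F] [Algebra (ZMod p) F]
    (hcard : Fintype.card F = p ^ m)
    (f : F → ZMod p)
    (hinv : ∀ (a : (ZMod p)ˣ) (x : F), f (algebraMap (ZMod p) F (a : ZMod p) * x) = f x)
    (σ : (ZMod p)ˣ → (ℂ →+* ℂ))
    (hσ : ∀ y : (ZMod p)ˣ, σ y (Complex.exp (2 * Real.pi * Complex.I / p))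
        = Complex.exp (2 * Real.pi * Complex.I / p) ^ ((y : ZMod p)).val)
    (i : ZMod p) (hi : i ≠ f 0) (β : F) (hβ : β ≠ 0) :
    (((((Dset f i).erase 0).filter
        fun α => Algebra.trace (ZMod p) F (β * α) ≠ 0).card : ℂ))
      = ((p : ℂ) - 1) / (p : ℂ) * (((Dset f i).erase 0).card : ℂ)
        - ((p : ℂ) - 1) / (p : ℂ) ^ 2 *
            ∑ y : (ZMod p)ˣ, σ y (zeta p (-i) * walsh p f β) := by
  have hp : p.Prime := Fact.out
  have hpC : (p : ℂ) ≠ 0 := Nat.cast_ne_zero.mpr hp.ne_zero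
  have hD0 : (Dset f i).erase 0 = Dset f i := by
    apply Finset.erase_eq_of_notMem
    simp only [Dset, mem_filter, mem_univ, true_and]
    exact fun h => hi h.symm
  rw [hD0]
  set T : ℂ := ∑ u ∈ Dset f i, zeta p (-(Algebra.trace (ZMod p) F (β * u))) with hT
  -- the Walsh sum
  have hS : (∑ y : (ZMod p)ˣ, σ y (zeta p (-i) * walsh p f β)) = (p : ℂ) * T := by
    have hzw : ∀ y : (ZMod p)ˣ, σ y (zeta p (-i) * walsh p f β)
        = ∑ x : F, zeta p ((y : ZMod p) * (f x - i) - Algebra.trace (ZMod p) F (β * x)) := by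
      intro y
      have h1 : zeta p (-i) * walsh p f β
          = ∑ x : F, zeta p (-i + (f x - Algebra.trace (ZMod p) F (β * x))) := by
        rw [walsh, Finset.mul_sum]
        exact Finset.sum_congr rfl fun x _ => (zeta_add p _ _).symm
      rw [h1, map_sum]
      have h2 : ∀ x : F, σ y (zeta p (-i + (f x - Algebra.trace (ZMod p) F (β * x))))
          = zeta p ((y : ZMod p) * (-i + (f x - Algebra.trace (ZMod p) F (β * x)))) :=
        fun x => sigma_zeta p (σ y) (y : ZMod p) (hσ y) _
      rw [Finset.sum_congr rfl fun x _ => h2 x]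
      rw [← sum_univ_smul p y⁻¹
        (fun x => zeta p ((y : ZMod p) * (-i + (f x - Algebra.trace (ZMod p) F (β * x)))))]
      refine Finset.sum_congr rfl fun x _ => ?_
      rw [hinv y⁻¹ x, trace_twist p β]
      congr 1
      have h3 : ((y⁻¹ : (ZMod p)ˣ) : ZMod p) = ((y : ZMod p))⁻¹ := by
        rw [← Units.val_inv_eq_inv_val]
      rw [h3]
      have hy0 : (y : ZMod p) ≠ 0 := y.ne_zero
      field_simp
      ring
    calc (∑ y : (ZMod p)ˣ, σ y (zeta p (-i) * walsh p f β))
        = ∑ y : (ZMod p)ˣ, ∑ x : F,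
            zeta p ((y : ZMod p) * (f x - i) - Algebra.trace (ZMod p) F (β * x)) :=
          Finset.sum_congr rfl fun y _ => hzw y
      _ = ∑ x : F, ∑ y : (ZMod p)ˣ,
            zeta p ((y : ZMod p) * (f x - i) - Algebra.trace (ZMod p) F (β * x)) :=
          Finset.sum_comm
      _ = ∑ x : F, zeta p (-(Algebra.trace (ZMod p) F (β * x))) *
            ((if f x - i = 0 then (p : ℂ) else 0) - 1) := by
          refine Finset.sum_congr rfl fun x _ => ?_
          have h4 : ∀ y : (ZMod p)ˣ,
              zeta p ((y : ZMod p) * (f x - i) - Algebra.trace (ZMod p) F (β * x))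
              = zeta p (-(Algebra.trace (ZMod p) F (β * x))) *
                  zeta p ((y : ZMod p) * (f x - i)) := by
            intro y
            rw [← zeta_add]
            congr 1
            ring
          rw [Finset.sum_congr rfl fun y _ => h4 y, ← Finset.mul_sum]
          congr 1
          rw [sum_units_eq p (fun c => zeta p (c * (f x - i))), sum_zeta_mul]
          simp [zeta_zero]
      _ = (∑ x : F, (if f x = i then (p : ℂ) * zeta p (-(Algebra.trace (ZMod p) F (β * x)))
              else 0)) - ∑ x : F, zeta p (-(Algebra.trace (ZMod p) F (β * x))) := by
          rw [← Finset.sum_sub_distrib]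
          refine Finset.sum_congr rfl fun x _ => ?_
          rcases eq_or_ne (f x) i with h | h
          · rw [if_pos (by rw [h, sub_self]), if_pos h]; ring
          · rw [if_neg (by simpa [sub_eq_zero] using h), if_neg h]; ring
      _ = (p : ℂ) * T - 0 := by
          congr 1
          · rw [hT, Finset.mul_sum, Dset, Finset.sum_filter]
          · have h5 : ∀ x : F, zeta p (-(Algebra.trace (ZMod p) F (β * x)))
                = zeta p (Algebra.trace (ZMod p) F ((-β) * x)) := by
              intro x; congr 1; rw [neg_mul, map_neg]
            rw [Finset.sum_congr rfl fun x _ => h5 x]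
            exact char_sum p (-β) (neg_ne_zero.mpr hβ)
      _ = (p : ℂ) * T := sub_zero _
  -- the zero-trace count
  have hN : ((((Dset f i).filter fun α => Algebra.trace (ZMod p) F (β * α) = 0).card : ℂ)) * p
      = ((Dset f i).card : ℂ) + ((p : ℂ) - 1) * T := by
    have inner : ∀ c : ZMod p, c ≠ 0 →
        (∑ u ∈ Dset f i, zeta p (c * Algebra.trace (ZMod p) F (β * u))) = T := by
      intro c hc
      have ha : (-(c⁻¹) : ZMod p) ≠ 0 := neg_ne_zero.mpr (inv_ne_zero hc)
      have := sum_Dset_smul p f hinv i (Units.mk0 _ ha)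
        (fun u => zeta p (c * Algebra.trace (ZMod p) F (β * u)))
      rw [← this, hT]
      refine Finset.sum_congr rfl fun u _ => ?_
      rw [trace_twist p β]
      congr 1
      simp only [Units.val_mk0]
      field_simp
    calc ((((Dset f i).filter fun α => Algebra.trace (ZMod p) F (β * α) = 0).card : ℂ)) * p
        = ∑ u ∈ Dset f i, (if Algebra.trace (ZMod p) F (β * u) = 0 then (p : ℂ) else 0) := by
          rw [← Finset.sum_filter, Finset.sum_const, nsmul_eq_mul]
      _ = ∑ u ∈ Dset f i, ∑ c : ZMod p, zeta p (c * Algebra.trace (ZMod p) F (β * u)) :=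
          Finset.sum_congr rfl fun u _ => (sum_zeta_mul p _).symm
      _ = ∑ c : ZMod p, ∑ u ∈ Dset f i, zeta p (c * Algebra.trace (ZMod p) F (β * u)) :=
          Finset.sum_comm
      _ = (∑ u ∈ Dset f i, zeta p ((0:ZMod p) * Algebra.trace (ZMod p) F (β * u)))
            + ∑ c ∈ univ.erase (0 : ZMod p), ∑ u ∈ Dset f i,
                zeta p (c * Algebra.trace (ZMod p) F (β * u)) :=
          (Finset.add_sum_erase _ _ (mem_univ 0)).symm
      _ = ((Dset f i).card : ℂ) + ((p : ℂ) - 1) * T := by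
          congr 1
          · simp [zeta_zero]
          · rw [Finset.sum_congr rfl fun c hc => inner c (Finset.mem_erase.mp hc).1,
              Finset.sum_const, Finset.card_erase_of_mem (mem_univ 0), card_univ, ZMod.card,
              nsmul_eq_mul]
            congr 1
            push_cast [Nat.cast_sub hp.one_le]
            ring
  -- splitting the weight
  have hsplit : ((((Dset f i).filter
        fun α => Algebra.trace (ZMod p) F (β * α) ≠ 0).card : ℂ))
      = ((Dset f i).card : ℂ)
        - ((((Dset f i).filter fun α => Algebra.trace (ZMod p) F (β * α) = 0).card : ℂ)) := by
    have h := Finset.card_filter_add_card_filter_not (s := Dset f i)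
      (p := fun α => Algebra.trace (ZMod p) F (β * α) = 0)
    have h' : ((Dset f i).filter fun a => ¬ Algebra.trace (ZMod p) F (β * a) = 0).card
        + ((Dset f i).filter fun α => Algebra.trace (ZMod p) F (β * α) = 0).card
        = (Dset f i).card := by rw [add_comm]; exact h
    simp only [ne_eq]
    rw [eq_sub_iff_add_eq, ← Nat.cast_add]
    exact_mod_cast congrArg (Nat.cast : ℕ → ℂ) h'
  rw [hsplit, hS]
  field_simp
  linear_combination (-1 : ℂ) * hN
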